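/- arXiv:math/0212212 — 3 statements merged into one kernel-verified Lean document; each statement's English description precedes it below -/
import Mathlib

section
/- If a sequence {x_m} in a compact set C ⊂ ℝ^N is generated by a continuous map T (x_{m+1} = T(x_m)), the distance dist(x_m, Γ) → 0 where Γ is the finite set of fixed points of T, and every accumulation point of {x_m} lies in Γ, then the sequence {x_m} converges to a single point of Γ. -/
/-- If a sequence in a compact set `C` generated by a continuous
map `T` satisfies `dist(x_m, Γ) → 0` where `Γ` is the finite (nonempty) set of
fixed points of `T`, and every accumulation point of the sequence lies in `Γ`,
then the sequence converges to a single point of `Γ`. -/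
theorem stmt0 {N : ℕ} (X : Set (EuclideanSpace ℝ (Fin N)))
    (T : EuclideanSpace ℝ (Fin N) → EuclideanSpace ℝ (Fin N))
    (hT : Continuous T) (hTX : Set.MapsTo T X X)
    (Γ : Set (EuclideanSpace ℝ (Fin N)))
    (hΓ : Γ = {x ∈ X | T x = x}) (hΓfin : Γ.Finite) (hΓne : Γ.Nonempty)
    (C : Set (EuclideanSpace ℝ (Fin N))) (hC : IsCompact C) (hCX : C ⊆ X)
    (hTC : Set.MapsTo T C C)
    (x : ℕ → EuclideanSpace ℝ (Fin N)) (hx0 : x 0 ∈ C)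
    (hiter : ∀ m, x (m + 1) = T (x m))
    (hdist : Filter.Tendsto (fun m => Metric.infDist (x m) Γ)
      Filter.atTop (nhds 0))
    (hacc : ∀ p, MapClusterPt p Filter.atTop x → p ∈ Γ) :
    ∃ p ∈ Γ, Filter.Tendsto x Filter.atTop (nhds p) := by
  classical
  have hTfix : ∀ p ∈ Γ, T p = p := by
    intro p hp; rw [hΓ] at hp; exact hp.2
  -- separation radius between distinct fixed points
  obtain ⟨r, hr, hsep⟩ : ∃ r > 0, ∀ p ∈ Γ, ∀ q ∈ Γ, p ≠ q → 3 * r ≤ dist p q := by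
    set s := hΓfin.toFinset with hs
    set t := (s ×ˢ s).filter (fun pq => pq.1 ≠ pq.2) with ht
    by_cases hne : t.Nonempty
    · refine ⟨(t.inf' hne fun pq => dist pq.1 pq.2) / 3, ?_, ?_⟩
      · have hpos : ∀ pq ∈ t, (0:ℝ) < dist pq.1 pq.2 := by
          intro pq hpq
          rw [ht, Finset.mem_filter] at hpq
          exact dist_pos.2 hpq.2
        have := (Finset.lt_inf'_iff hne (f := fun pq => dist pq.1 pq.2) (a := 0)).2 hpos
        linarith
      · intro p hp q hq hpq
        have hmem : (p, q) ∈ t := by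
          rw [ht, Finset.mem_filter]
          exact ⟨Finset.mem_product.2 ⟨hΓfin.mem_toFinset.2 hp, hΓfin.mem_toFinset.2 hq⟩, hpq⟩
        have := Finset.inf'_le (fun pq => dist pq.1 pq.2) hmem
        linarith
    · refine ⟨1, one_pos, fun p hp q hq hpq => ?_⟩
      exact absurd ⟨(p, q), by
        rw [ht, Finset.mem_filter]
        exact ⟨Finset.mem_product.2 ⟨hΓfin.mem_toFinset.2 hp, hΓfin.mem_toFinset.2 hq⟩, hpq⟩⟩ hne
  -- continuity radii at fixed points
  have hcont : ∀ p, ∃ d > 0, p ∈ Γ → ∀ y, dist y p < d → dist (T y) p < r := by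
    intro p
    by_cases hp : p ∈ Γ
    · have hca := hT.continuousAt (x := p)
      rw [Metric.continuousAt_iff] at hca
      obtain ⟨d, hd, hball⟩ := hca r hr
      refine ⟨d, hd, fun _ y hy => ?_⟩
      have := hball hy
      rwa [hTfix p hp] at this
    · exact ⟨1, one_pos, fun h => absurd h hp⟩
  choose d hd0 hdprop using hcont
  have hsne : hΓfin.toFinset.Nonempty := by
    simpa [Set.Finite.toFinset_nonempty] using hΓne
  set η := min r (hΓfin.toFinset.inf' hsne d) with hηdef
  have hη0 : 0 < η := by
    refine lt_min hr ?_
    exact (Finset.lt_inf'_iff hsne (f := d) (a := 0)).2 fun p _ => hd0 p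
  have hηr : η ≤ r := min_le_left _ _
  have hηd : ∀ p ∈ Γ, η ≤ d p := fun p hp =>
    le_trans (min_le_right _ _) (Finset.inf'_le d (hΓfin.mem_toFinset.2 hp))
  -- nearest fixed point attaining the inf distance
  have hnear : ∀ m, ∃ qm ∈ Γ, Metric.infDist (x m) Γ = dist (x m) qm :=
    fun m => hΓfin.isCompact.exists_infDist_eq_dist hΓne (x m)
  choose q hqΓ hqd using hnear
  -- eventually the inf distance is below η
  obtain ⟨M, hM⟩ := Filter.eventually_atTop.1 (hdist.eventually (gt_mem_nhds hη0))
  -- the nearest fixed point is eventually constant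
  have hconst : ∀ m, M ≤ m → q m = q M := by
    intro m hm
    induction m with
    | zero =>
      have : M = 0 := Nat.le_zero.1 hm
      rw [this]
    | succ n ih =>
      rcases eq_or_lt_of_le hm with h | h
      · rw [← h]
      · have hn : M ≤ n := Nat.lt_succ_iff.1 h
        have hqn := ih hn
        have h1 : dist (x n) (q n) < η := by rw [← hqd n]; exact hM n hn
        have h2 : dist (x (n + 1)) (q n) < r := by
          rw [hiter n]
          exact hdprop (q n) (hqΓ n) (x n) (lt_of_lt_of_le h1 (hηd (q n) (hqΓ n)))
        have h3 : dist (x (n + 1)) (q (n + 1)) < r := by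
          rw [← hqd (n + 1)]
          exact lt_of_lt_of_le (hM (n + 1) hm) hηr
        by_contra hne
        have hne' : q (n + 1) ≠ q n := by rw [hqn]; exact hne
        have := hsep (q (n + 1)) (hqΓ (n + 1)) (q n) (hqΓ n) hne'
        have htri : dist (q (n + 1)) (q n) ≤
            dist (q (n + 1)) (x (n + 1)) + dist (x (n + 1)) (q n) :=
          dist_triangle _ _ _
        rw [dist_comm (q (n + 1)) (x (n + 1))] at htri
        rw [hqn] at this h2 htri
        linarith
  refine ⟨q M, hqΓ M, ?_⟩
  rw [tendsto_iff_dist_tendsto_zero]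
  refine hdist.congr' ?_
  filter_upwards [Filter.eventually_ge_atTop M] with m hm
  rw [hqd m, hconst m hm]
end

section
/- For fixed generator positions p_1,…,p_n, among all partitions W = {W_1,…,W_n} of Q, the Voronoi partition minimizes the cost H(P, W) = Σ_i ∫_{W_i} f(‖q − p_i‖) dφ(q), i.e., H(P, V(P)) ≤ H(P, W) for every partition W. -/
open MeasureTheory
open scoped NNReal ENNReal

/-- For fixed generators `p_1, …, p_n`, among all partitions
`W = {W_1, …, W_n}` of `Q` (measurable sets covering `Q` with pairwise `φ`-null
intersections), the Voronoi partition minimizes the cost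
`H(P,W) = Σ_i ∫_{W_i} f(‖q − p_i‖) dφ(q)`. Cost stated with lower integrals
since `f ≥ 0`; the Voronoi cells are assumed to have `φ`-null pairwise
overlaps (their boundaries). -/
theorem stmt2 {N n : ℕ} (Q : Set (EuclideanSpace ℝ (Fin N)))
    (hQconv : Convex ℝ Q) (hQcomp : IsCompact Q)
    (φ : Measure (EuclideanSpace ℝ (Fin N)))
    (f : ℝ≥0 → ℝ≥0∞) (hf : Monotone f)
    (p : Fin n → EuclideanSpace ℝ (Fin N)) (hpQ : ∀ i, p i ∈ Q)
    (hdist : Function.Injective p)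
    (V : Fin n → Set (EuclideanSpace ℝ (Fin N)))
    (hV : ∀ i, V i = {q ∈ Q | ∀ j, dist q (p i) ≤ dist q (p j)})
    (hVnull : ∀ i j, i ≠ j → φ (V i ∩ V j) = 0)
    (W : Fin n → Set (EuclideanSpace ℝ (Fin N)))
    (hWmeas : ∀ i, MeasurableSet (W i)) (hWQ : ∀ i, W i ⊆ Q)
    (hWcover : (⋃ i, W i) = Q)
    (hWnull : ∀ i j, i ≠ j → φ (W i ∩ W j) = 0) :
    ∑ i, ∫⁻ q in V i, f (nndist q (p i)) ∂φ ≤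
      ∑ i, ∫⁻ q in W i, f (nndist q (p i)) ∂φ := by
  classical
  rcases Nat.eq_zero_or_pos n with hn | hn
  · subst hn; simp only [Finset.univ_eq_empty, Finset.sum_empty]; exact le_rfl
  haveI : Nonempty (Fin n) := Fin.pos_iff_nonempty.mp hn
  have hfm : Measurable f := hf.measurable
  set g : EuclideanSpace ℝ (Fin N) → ℝ≥0∞ := fun q => ⨅ j, f (nndist q (p j)) with hg
  have hdistm : ∀ j, Measurable fun q => nndist q (p j) := fun j =>
    (continuous_id.nndist continuous_const).measurable
  have hgm : Measurable g := Measurable.iInf fun j => hfm.comp (hdistm j)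
  have hVmeas : ∀ i, MeasurableSet (V i) := by
    intro i
    rw [hV i]
    have : {q ∈ Q | ∀ j, dist q (p i) ≤ dist q (p j)} =
        Q ∩ ⋂ j, {q | dist q (p i) ≤ dist q (p j)} := by
      ext q; simp [Set.mem_iInter]
    rw [this]
    exact (hQcomp.isClosed.measurableSet).inter
      (MeasurableSet.iInter fun j =>
        (isClosed_le (continuous_id.dist continuous_const)
          (continuous_id.dist continuous_const)).measurableSet)
  have hVU : (⋃ i, V i) = Q := by
    apply Set.Subset.antisymm
    · intro q hq
      rcases Set.mem_iUnion.mp hq with ⟨i, hi⟩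
      rw [hV i] at hi; exact hi.1
    · intro q hq
      obtain ⟨i, -, hi⟩ := Finset.exists_min_image Finset.univ
        (fun j => dist q (p j)) ⟨Classical.arbitrary (Fin n), Finset.mem_univ _⟩
      exact Set.mem_iUnion.mpr ⟨i, by rw [hV i]; exact ⟨hq, fun j => hi j (Finset.mem_univ j)⟩⟩
  have hgV : ∀ i, ∀ q ∈ V i, g q = f (nndist q (p i)) := by
    intro i q hq
    rw [hV i] at hq
    refine le_antisymm (iInf_le _ i) (le_iInf fun j => hf ?_)
    rw [← NNReal.coe_le_coe, coe_nndist, coe_nndist]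
    exact hq.2 j
  have hL : ∑ i, ∫⁻ q in V i, f (nndist q (p i)) ∂φ = ∫⁻ q in Q, g q ∂φ := by
    have h1 : ∀ i, ∫⁻ q in V i, f (nndist q (p i)) ∂φ = ∫⁻ q in V i, g q ∂φ := by
      intro i
      exact (setLIntegral_congr_fun (hVmeas i)
        (fun q hq => (hgV i q hq).symm))
    rw [Finset.sum_congr rfl fun i _ => h1 i]
    rw [← hVU, lintegral_iUnion₀ (fun i => (hVmeas i).nullMeasurableSet)
      (fun i j hij => hVnull i j hij) , tsum_fintype]
  have hR : ∫⁻ q in Q, g q ∂φ ≤ ∑ i, ∫⁻ q in W i, f (nndist q (p i)) ∂φ := by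
    calc ∫⁻ q in Q, g q ∂φ = ∫⁻ q in ⋃ i, W i, g q ∂φ := by rw [hWcover]
    _ ≤ ∑' i, ∫⁻ q in W i, g q ∂φ := lintegral_iUnion_le _ _
    _ = ∑ i, ∫⁻ q in W i, g q ∂φ := tsum_fintype _
    _ ≤ ∑ i, ∫⁻ q in W i, f (nndist q (p i)) ∂φ :=
        Finset.sum_le_sum fun i _ => lintegral_mono fun q => iInf_le _ i
  rw [hL]; exact hR
end

section
/- For passive vehicle dynamics with storage functions S_i and the PD control u_i = −k_p M_{V_i}(p_i − C_{V_i}) − k_d ṗ_i, the energy function E = (k_p/2) H_V + Σ_i S_i satisfies dE/dt ≤ −k_d Σ_i ‖ṗ_i‖² ≤ 0 along closed-loop trajectories. -/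
open scoped RealInnerProductSpace

/-- For passive vehicle dynamics (storage functions `S_i ≥ 0`
with `Ṡ_i ≤ u_i · ṗ_i`) under the PD control
`u_i = −k_p M_i (p_i − C_i) − k_d ṗ_i`, the energy
`E = (k_p/2) H_V + Σ_i S_i` satisfies `dE/dt ≤ −k_d Σ_i ‖ṗ_i‖² ≤ 0`. -/
theorem stmt16 {N n : ℕ}
    (p : ℝ → Fin n → EuclideanSpace ℝ (Fin N))
    (C : Fin n → EuclideanSpace ℝ (Fin N))
    (kp kd : ℝ) (hkp : 0 < kp) (hkd : 0 < kd)
    (M : Fin n → ℝ) (hM : ∀ i, 0 < M i)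
    (t : ℝ)
    (v : Fin n → EuclideanSpace ℝ (Fin N))
    (hv : ∀ i, HasDerivAt (fun s => p s i) (v i) t)
    (u : Fin n → EuclideanSpace ℝ (Fin N))
    (hu : ∀ i, u i = -((kp * M i) • (p t i - C i)) - kd • v i)
    (S : Fin n → ℝ → ℝ) (hSnn : ∀ i s, 0 ≤ S i s)
    (dS : Fin n → ℝ) (hS : ∀ i, HasDerivAt (S i) (dS i) t)
    (hpassive : ∀ i, dS i ≤ ⟪u i, v i⟫)
    (HV : ℝ → ℝ)
    (hgrad : HasDerivAt HV (∑ i, ⟪(2 * M i) • (p t i - C i), v i⟫) t) :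
    ∃ dE, HasDerivAt (fun s => kp / 2 * HV s + ∑ i, S i s) dE t ∧
      dE ≤ -kd * ∑ i, ‖v i‖ ^ 2 ∧ -kd * ∑ i, ‖v i‖ ^ 2 ≤ 0 := by
  refine ⟨kp / 2 * (∑ i, ⟪(2 * M i) • (p t i - C i), v i⟫) + ∑ i, dS i,
    ((hgrad.const_mul (kp / 2)).add (HasDerivAt.fun_sum fun i _ => hS i)), ?_, ?_⟩
  · have key : ∀ i, kp / 2 * ⟪(2 * M i) • (p t i - C i), v i⟫ + dS i
        ≤ -kd * ‖v i‖ ^ 2 := by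
      intro i
      have h1 := hpassive i
      rw [hu i] at h1
      rw [sub_eq_add_neg, inner_add_left, inner_neg_left, inner_neg_left,
        inner_smul_left, inner_smul_left, real_inner_self_eq_norm_sq] at h1
      rw [inner_smul_left]
      have : kp / 2 * (2 * M i * ⟪p t i - C i, v i⟫)
          = kp * M i * ⟪p t i - C i, v i⟫ := by ring
      simp only [starRingEnd_apply, star_trivial] at h1 ⊢
      rw [this]
      nlinarith [h1]
    calc kp / 2 * (∑ i, ⟪(2 * M i) • (p t i - C i), v i⟫) + ∑ i, dS i
        = ∑ i, (kp / 2 * ⟪(2 * M i) • (p t i - C i), v i⟫ + dS i) := by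
          rw [Finset.mul_sum, Finset.sum_add_distrib]
      _ ≤ ∑ i, -kd * ‖v i‖ ^ 2 := Finset.sum_le_sum fun i _ => key i
      _ = -kd * ∑ i, ‖v i‖ ^ 2 := (Finset.mul_sum _ _ _).symm
  · have : 0 ≤ ∑ i, ‖v i‖ ^ 2 := Finset.sum_nonneg fun i _ => sq_nonneg _
    nlinarith
end
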